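/- Let q ≥ 2, let m,k,n,k' ∈ ℕ with k ≤ k', let φ : [k] → [k'] be an injection, let M ∈ PHM(m,k,n), let Y be a one-wise uniform distribution on (ZMod q)^k, and let D be any probability distribution on (ZMod q)^{n×k'}. Then ‖μ_{Input(D,M)} − 1‖_∞ ≤ Σ |μ̂_D(U)|, where the sum ranges over all nonzero U ∈ (ZMod q)^{n×k'} such that supp(U) ⊆ φ(supp(M)) and, for every j ∈ [m], |supp(U) ∩ φ(supp(M_j))| ≠ 1. Here supp(U) := {(i,c) ∈ [n]×[k'] : U_{i,c} ≠ 0} and φ(S) := {(i,φ(ℓ)) : (i,ℓ) ∈ S} for S ⊆ [n]×[k]. -/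

import Mathlib

open Finset

noncomputable section

attribute [local instance] Classical.propDecidable

/-- A probability distribution on a finite set, given by its mass function. -/
def IsDist {S : Type*} [Fintype S] (D : S → ℝ) : Prop :=
  (∀ x, 0 ≤ D x) ∧ ∑ x, D x = 1

/-- The density function of a distribution: probability times cardinality. -/
def densityFn {S : Type*} [Fintype S] (D : S → ℝ) (x : S) : ℝ :=
  (Fintype.card S : ℝ) * D x

/-- `ω = exp(2πi/q)`. -/
def omegaQ (q : ℕ) : ℂ := Complex.exp (2 * Real.pi * Complex.I / q)

/-- Fourier coefficient of `g : (ZMod q)^I → ℂ` at frequency `u`. -/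
def fcoef {q : ℕ} [NeZero q] {I : Type*} [Fintype I] [DecidableEq I]
    (g : (I → ZMod q) → ℂ) (u : I → ZMod q) : ℂ :=
  (∑ x : I → ZMod q, g x * omegaQ q ^ (-((∑ i, u i * x i : ZMod q).val : ℤ))) /
    (Fintype.card (I → ZMod q) : ℂ)

/-- Fourier coefficient of the density of a distribution. -/
def fourierDensity {q : ℕ} [NeZero q] {I : Type*} [Fintype I] [DecidableEq I]
    (D : (I → ZMod q) → ℝ) (u : I → ZMod q) : ℂ :=
  fcoef (fun x => ((densityFn D x : ℝ) : ℂ)) u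

/-- Number of nonzero coordinates. -/
def wt {q : ℕ} {I : Type*} [Fintype I] (u : I → ZMod q) : ℕ :=
  (univ.filter fun i => u i ≠ 0).card

/-- One-wise uniformity: each coordinate marginal is uniform. -/
def OneWise {q : ℕ} [NeZero q] {I : Type*} [Fintype I] [DecidableEq I]
    (Y : (I → ZMod q) → ℝ) : Prop :=
  ∀ (j : I) (b : ZMod q), (∑ y : I → ZMod q, if y j = b then Y y else 0) = 1 / q

/-- Row `j` of a matrix. -/
def mrow {q m k : ℕ} (U : Fin m × Fin k → ZMod q) (j : Fin m) : Fin k → ZMod q :=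
  fun ℓ => U (j, ℓ)

/-- A matrix is singleton-free if no row has exactly one nonzero entry. -/
def SingletonFree {q m k : ℕ} (U : Fin m × Fin k → ZMod q) : Prop :=
  ∀ j : Fin m, (univ.filter fun ℓ => U (j, ℓ) ≠ 0).card ≠ 1

/-- Row weight: number of nonzero rows. -/
def rwt {q m k : ℕ} (U : Fin m × Fin k → ZMod q) : ℕ :=
  (univ.filter fun j : Fin m => mrow U j ≠ 0).card

/-- Product distribution `Y^{⊗m}`: one independent sample of `Y` per row. -/
def prodRows {q m k : ℕ} (Y : (Fin k → ZMod q) → ℝ) (Z : Fin m × Fin k → ZMod q) : ℝ :=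
  ∏ j : Fin m, Y (mrow Z j)

/-- `k`-partite hypermatchings: each column has pairwise distinct entries. -/
def PHMset (m k n : ℕ) : Finset (Fin m → Fin k → Fin n) :=
  univ.filter fun M => ∀ ℓ : Fin k, Function.Injective fun j => M j ℓ

/-- The projection `Π^φ_M`. -/
def projMap {q m k n k' : ℕ} (φ : Fin k → Fin k') (M : Fin m → Fin k → Fin n)
    (X : Fin n × Fin k' → ZMod q) : Fin m × Fin k → ZMod q :=
  fun p => X (M p.1 p.2, φ p.2)

/-- The distribution of `Π^φ_M X − Y` for `X ∼ D` and `Y ∼ Y^{⊗m}` independent. -/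
def inputDist {q m k n k' : ℕ} [NeZero q] (D : (Fin n × Fin k' → ZMod q) → ℝ)
    (Y : (Fin k → ZMod q) → ℝ) (φ : Fin k → Fin k') (M : Fin m → Fin k → Fin n) :
    (Fin m × Fin k → ZMod q) → ℝ :=
  fun Z => ∑ X : Fin n × Fin k' → ZMod q, D X * prodRows Y (projMap φ M X - Z)

/-- Normalized 1-norm (expectation of absolute value). -/
def norm1 {S : Type*} [Fintype S] (g : S → ℂ) : ℝ :=
  (∑ x, ‖g x‖) / (Fintype.card S : ℝ)

/-- Sup-norm. -/
def normInf {S : Type*} [Fintype S] (g : S → ℂ) : ℝ := ⨆ x, ‖g x‖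

/-- Square of the normalized 2-norm. -/
def norm2sq {S : Type*} [Fintype S] (g : S → ℂ) : ℝ :=
  (∑ x, ‖g x‖ ^ 2) / (Fintype.card S : ℝ)

/-- The Fourier bound function `U_{C,s}(h; N)`. -/
def UBound (q : ℕ) (C : ℝ) (s h N : ℕ) : ℝ :=
  if h = 0 then 1
  else if h ≤ s then (C * Real.sqrt ((s : ℝ) * N) / h) ^ ((h : ℝ) / 2)
  else min ((C * Real.sqrt (N : ℝ) / Real.sqrt (h : ℝ)) ^ ((h : ℝ) / 2))
       ((Real.exp 1 * (q : ℝ) ^ 2 * N / h) ^ ((h : ℝ) / 2))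

/-- `(C,s)`-boundedness of a distribution. -/
def IsBounded (q : ℕ) [NeZero q] {I : Type*} [Fintype I] [DecidableEq I] (C : ℝ) (s : ℕ)
    (D : (I → ZMod q) → ℝ) : Prop :=
  ∀ h : ℕ, 1 ≤ h → h ≤ Fintype.card I →
    ∑ u ∈ univ.filter (fun u : I → ZMod q => wt u = h), ‖fourierDensity D u‖
      ≤ UBound q C s h (Fintype.card I)

/-- The support of a vector, as a finset. -/
def suppF {q : ℕ} {I : Type*} [Fintype I] (u : I → ZMod q) : Finset I :=
  univ.filter fun i => u i ≠ 0

/-- `φ(supp(M_j))`: the `j`-th hyperedge of `M`, embedded into `[n]×[k']` via `φ`. -/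
def edgePhi {m k n k' : ℕ} (φ : Fin k → Fin k') (M : Fin m → Fin k → Fin n) (j : Fin m) :
    Finset (Fin n × Fin k') :=
  univ.image fun ℓ => (M j ℓ, φ ℓ)


/-!
Fourier inversion writes the density of `Π X − Y` at `Z` as
`∑_V μ̂_D(Πᵀ V) · ∏_j Ŷ(−V_j) · ω^⟨V,Z⟩`, where `Πᵀ V` extends `V` by zero along the map
sending slot `(j, ℓ)` to vertex `(M j ℓ, φ ℓ)`; this map is injective because `φ` and the
columns of `M` are. The term `V = 0` is `1`. Otherwise `|Ŷ| ≤ 1`, and one-wise uniformity makes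
`Ŷ` vanish at vectors of weight one, so only singleton-free `V ≠ 0` contribute, and `Πᵀ` maps
these injectively to frequencies with the stated support conditions.
-/

open Function

@[simp]
lemma mem_suppF {q : ℕ} {I : Type*} [Fintype I] {u : I → ZMod q} {i : I} :
    i ∈ suppF u ↔ u i ≠ 0 := by
  simp [suppF]

section Fourier

variable {q : ℕ} [NeZero q] {I : Type*} [Fintype I] [DecidableEq I]

lemma omegaQ_zpow_neg_val (a : ZMod q) :
    omegaQ q ^ (-(a.val : ℤ)) = (ZMod.stdAddChar a)⁻¹ := by
  rw [zpow_neg, zpow_natCast, omegaQ, ← Complex.exp_nat_mul, ZMod.stdAddChar_apply,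
    ZMod.toCircle_apply]
  congr 2
  ring

lemma fourierDensity_eq_sum (D : (I → ZMod q) → ℝ) (u : I → ZMod q) :
    fourierDensity D u = ∑ x, (D x : ℂ) * (ZMod.stdAddChar (u ⬝ᵥ x))⁻¹ := by
  have hcard : (Fintype.card (I → ZMod q) : ℂ) ≠ 0 :=
    Nat.cast_ne_zero.mpr Fintype.card_ne_zero
  rw [fourierDensity, fcoef, div_eq_iff hcard, sum_mul]
  refine sum_congr rfl fun x _ => ?_
  rw [omegaQ_zpow_neg_val, densityFn, dotProduct]
  push_cast
  ring

lemma fourierDensity_zero {D : (I → ZMod q) → ℝ} (hD : ∑ x, D x = 1) :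
    fourierDensity D 0 = 1 := by
  simp only [fourierDensity_eq_sum, zero_dotProduct, AddChar.map_zero_eq_one, inv_one, mul_one]
  exact_mod_cast hD

lemma norm_fourierDensity_le_one {D : (I → ZMod q) → ℝ} (hD : IsDist D) (u : I → ZMod q) :
    ‖fourierDensity D u‖ ≤ 1 := by
  rw [fourierDensity_eq_sum]
  calc ‖∑ x, (D x : ℂ) * (ZMod.stdAddChar (u ⬝ᵥ x))⁻¹‖
      ≤ ∑ x, ‖(D x : ℂ) * (ZMod.stdAddChar (u ⬝ᵥ x))⁻¹‖ := norm_sum_le _ _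
    _ = ∑ x, D x := by
        refine sum_congr rfl fun x _ => ?_
        rw [norm_mul, norm_inv, AddChar.norm_apply, inv_one, mul_one, Complex.norm_real,
          Real.norm_of_nonneg (hD.1 x)]
    _ = 1 := hD.2

lemma sum_stdAddChar_dotProduct (u : I → ZMod q) :
    ∑ v : I → ZMod q, ZMod.stdAddChar (v ⬝ᵥ u)
      = if u = 0 then (Fintype.card (I → ZMod q) : ℂ) else 0 := by
  have hfactor : ∑ v : I → ZMod q, ZMod.stdAddChar (v ⬝ᵥ u)
      = ∏ i, ∑ a : ZMod q, ZMod.stdAddChar (a * u i) := by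
    rw [Fintype.prod_sum]
    exact sum_congr rfl fun v _ => map_sum (ZMod.stdAddChar).toAddMonoidHom _ _
  simp_rw [hfactor, AddChar.sum_mulShift _ (ZMod.isPrimitive_stdAddChar q), ZMod.card]
  split_ifs with hu
  · simp [hu, ZMod.card]
  · obtain ⟨i, hi⟩ := Function.ne_iff.mp hu
    exact prod_eq_zero (mem_univ i) (by simp [show u i ≠ 0 from hi])

lemma densityFn_eq_sum_fourierDensity (D : (I → ZMod q) → ℝ) (x : I → ZMod q) :
    (densityFn D x : ℂ) = ∑ u, fourierDensity D u * ZMod.stdAddChar (u ⬝ᵥ x) := by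
  have horth : ∀ y, ∑ u : I → ZMod q,
      (D y : ℂ) * (ZMod.stdAddChar (u ⬝ᵥ y))⁻¹ * ZMod.stdAddChar (u ⬝ᵥ x)
        = if y = x then (D y : ℂ) * Fintype.card (I → ZMod q) else 0 := by
    intro y
    simp_rw [mul_assoc, ← mul_sum, ← AddChar.map_neg_eq_inv, ← AddChar.map_add_eq_mul,
      neg_add_eq_sub, ← dotProduct_sub, sum_stdAddChar_dotProduct, sub_eq_zero,
      eq_comm (a := x), mul_ite, mul_zero]
  simp_rw [fourierDensity_eq_sum, sum_mul]
  rw [sum_comm]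
  simp_rw [horth, sum_ite_eq', mem_univ, if_true, densityFn]
  push_cast
  ring

lemma fourierDensity_eq_zero_of_oneWise {Y : (I → ZMod q) → ℝ} (hY : OneWise Y)
    {v : I → ZMod q} (hv : (suppF v).card = 1) : fourierDensity Y v = 0 := by
  obtain ⟨i, hi⟩ := card_eq_one.mp hv
  have hvi : v i ≠ 0 := mem_suppF.mp (hi ▸ mem_singleton_self i)
  have hzero : ∀ j ≠ i, v j = 0 := fun j hj => by
    by_contra h
    exact hj (mem_singleton.mp (hi ▸ mem_suppF.mpr h))
  have hdot : ∀ y : I → ZMod q, v ⬝ᵥ y = v i * y i := fun y =>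
    sum_eq_single i (fun j _ hj => by rw [hzero j hj, zero_mul]) (by simp)
  have hmarginal : ∀ b : ZMod q,
      ∑ y ∈ univ.filter (fun y : I → ZMod q => y i = b), (Y y : ℂ) = (1 / q : ℝ) := by
    intro b
    rw [← hY i b, ← sum_filter]
    push_cast
    rfl
  calc fourierDensity Y v
      = ∑ b : ZMod q, ∑ y ∈ univ.filter (fun y : I → ZMod q => y i = b),
          (Y y : ℂ) * ZMod.stdAddChar (b * -v i) := by
        rw [fourierDensity_eq_sum, ← sum_fiberwise univ (fun y => y i)]
        refine sum_congr rfl fun b _ => sum_congr rfl fun y hy => ?_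
        rw [hdot, (mem_filter.mp hy).2, mul_comm (v i), mul_neg, AddChar.map_neg_eq_inv]
    _ = (1 / q : ℝ) * ∑ b : ZMod q, ZMod.stdAddChar (b * -v i) := by
        simp_rw [← sum_mul, hmarginal, mul_sum]
    _ = 0 := by
        rw [AddChar.sum_mulShift _ (ZMod.isPrimitive_stdAddChar q),
          if_neg (neg_ne_zero.mpr hvi), Nat.cast_zero, mul_zero]

end Fourier

lemma singletonFree_neg {q m k : ℕ} {V : Fin m × Fin k → ZMod q} :
    SingletonFree (-V) ↔ SingletonFree V := by
  simp only [SingletonFree, Pi.neg_apply, ne_eq, neg_eq_zero]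

section Products

variable {q : ℕ} [NeZero q] {m k : ℕ}

lemma fourierDensity_prodRows (Y : (Fin k → ZMod q) → ℝ) (V : Fin m × Fin k → ZMod q) :
    fourierDensity (prodRows Y) V = ∏ j, fourierDensity Y (mrow V j) := by
  simp_rw [fourierDensity_eq_sum, Fintype.prod_sum]
  rw [← (Equiv.curry (Fin m) (Fin k) (ZMod q)).sum_comp]
  refine sum_congr rfl fun W _ => ?_
  have hchar :
      ZMod.stdAddChar (V ⬝ᵥ W) = ∏ j, ZMod.stdAddChar (mrow V j ⬝ᵥ mrow W j) := by
    rw [dotProduct, Fintype.sum_prod_type]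
    exact map_sum (ZMod.stdAddChar).toAddMonoidHom _ _
  rw [prod_mul_distrib, prodRows, hchar, ← prod_inv_distrib]
  push_cast
  rfl

lemma fourierDensity_prodRows_zero {Y : (Fin k → ZMod q) → ℝ} (hY : ∑ y, Y y = 1) :
    fourierDensity (prodRows Y) (0 : Fin m × Fin k → ZMod q) = 1 := by
  rw [fourierDensity_prodRows]
  exact prod_eq_one fun j _ => fourierDensity_zero hY

lemma norm_fourierDensity_prodRows_le {Y : (Fin k → ZMod q) → ℝ} (hY : IsDist Y)
    (hY1 : OneWise Y) (V : Fin m × Fin k → ZMod q) :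
    ‖fourierDensity (prodRows Y) V‖ ≤ if SingletonFree V then 1 else 0 := by
  rw [fourierDensity_prodRows, norm_prod]
  split_ifs with hV
  · exact prod_le_one (fun j _ => norm_nonneg _) fun j _ => norm_fourierDensity_le_one hY _
  · obtain ⟨j, hj⟩ := not_forall_not.mp hV
    rw [prod_eq_zero (mem_univ j)
      (by rw [fourierDensity_eq_zero_of_oneWise (v := mrow V j) hY1 hj, norm_zero])]

lemma norm_mul_fourierDensity_prodRows_neg_le {Y : (Fin k → ZMod q) → ℝ} (hY : IsDist Y)
    (hY1 : OneWise Y) (c : ℂ) (V : Fin m × Fin k → ZMod q) :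
    ‖c * fourierDensity (prodRows Y) (-V)‖ ≤ if SingletonFree V then ‖c‖ else 0 := by
  have hP := norm_fourierDensity_prodRows_le hY hY1 (-V)
  rw [singletonFree_neg] at hP
  rw [norm_mul]
  split_ifs at hP ⊢
  exacts [mul_le_of_le_one_right (norm_nonneg _) hP,
    mul_nonpos_of_nonneg_of_nonpos (norm_nonneg _) hP]

end Products

section Extension

variable {α β : Type*} [Fintype α] [Fintype β] {e : α → β}

lemma extend_zero_dotProduct {R : Type*} [NonUnitalNonAssocSemiring R] (he : Injective e)
    (v : α → R) (x : β → R) : extend e v 0 ⬝ᵥ x = v ⬝ᵥ (x ∘ e) :=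
  (Fintype.sum_of_injective e he _ _
    (fun b hb => by rw [extend_apply' _ _ _ hb, Pi.zero_apply, zero_mul])
    (fun a => by rw [he.extend_apply, comp_apply])).symm

lemma suppF_extend_zero {q : ℕ} (he : Injective e) (v : α → ZMod q) :
    suppF (extend e v 0) = (suppF v).map ⟨e, he⟩ := by
  ext b
  by_cases hb : ∃ a, e a = b
  · obtain ⟨a, rfl⟩ := hb
    simp [he.extend_apply]
  · simp [not_exists.mp hb]

variable {q : ℕ} [NeZero q] [DecidableEq α] [DecidableEq β]

lemma sum_mul_densityFn_comp_sub (he : Injective e) (D : (β → ZMod q) → ℝ)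
    (P : (α → ZMod q) → ℝ) (z : α → ZMod q) :
    ∑ x, (D x : ℂ) * densityFn P (x ∘ e - z)
      = ∑ v, fourierDensity D (extend e v 0) * fourierDensity P (-v)
          * ZMod.stdAddChar (v ⬝ᵥ z) := by
  calc ∑ x, (D x : ℂ) * densityFn P (x ∘ e - z)
      = ∑ x, ∑ v, (D x : ℂ) *
          (fourierDensity P (-v) * ZMod.stdAddChar (-v ⬝ᵥ (x ∘ e - z))) := by
        refine sum_congr rfl fun x _ => ?_
        rw [densityFn_eq_sum_fourierDensity, mul_sum]
        exact (Fintype.sum_equiv (Equiv.neg _) _ _ fun _ => rfl).symm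
    _ = ∑ x, ∑ v, (D x : ℂ) * (ZMod.stdAddChar (extend e v 0 ⬝ᵥ x))⁻¹
          * (fourierDensity P (-v) * ZMod.stdAddChar (v ⬝ᵥ z)) := by
        refine sum_congr rfl fun x _ => sum_congr rfl fun v _ => ?_
        rw [neg_dotProduct, dotProduct_sub, neg_sub, AddChar.map_sub_eq_div,
          extend_zero_dotProduct he]
        ring
    _ = _ := by
        rw [sum_comm]
        simp_rw [fourierDensity_eq_sum D, sum_mul, mul_assoc]

end Extension

section Hypermatching

variable {m k n k' : ℕ} (φ : Fin k → Fin k') (M : Fin m → Fin k → Fin n)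

def hyperedgeVertex (r : Fin m × Fin k) : Fin n × Fin k' := (M r.1 r.2, φ r.2)

variable {φ M}

lemma hyperedgeVertex_injective (hφ : Injective φ) (hM : M ∈ PHMset m k n) :
    Injective (hyperedgeVertex φ M) := by
  rintro ⟨j, ℓ⟩ ⟨j', ℓ'⟩ h
  simp only [hyperedgeVertex, Prod.mk.injEq] at h
  obtain rfl := hφ h.2
  exact Prod.ext ((mem_filter.mp hM).2 ℓ h.1) rfl

variable {q : ℕ}

lemma card_suppF_extend_inter_edgePhi (hφ : Injective φ) (hM : M ∈ PHMset m k n)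
    (V : Fin m × Fin k → ZMod q) (j : Fin m) :
    (suppF (extend (hyperedgeVertex φ M) V 0) ∩ edgePhi φ M j).card
      = (suppF (mrow V j)).card := by
  have he := hyperedgeVertex_injective hφ hM
  have hrow : suppF (extend (hyperedgeVertex φ M) V 0) ∩ edgePhi φ M j
      = (suppF (mrow V j)).map
          ⟨fun ℓ => hyperedgeVertex φ M (j, ℓ), fun _ _ h => by simpa using he h⟩ := by
    ext p
    simp only [suppF_extend_zero he, mem_inter, mem_map, edgePhi, mem_image, mem_univ,
      true_and, Embedding.coeFn_mk]
    constructor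
    · rintro ⟨⟨r, hr, rfl⟩, ℓ, hℓ⟩
      have hℓ' : hyperedgeVertex φ M (j, ℓ) = hyperedgeVertex φ M r := hℓ
      obtain rfl := he hℓ'
      exact ⟨ℓ, by simpa [mrow] using hr, rfl⟩
    · rintro ⟨ℓ, hℓ, rfl⟩
      exact ⟨⟨(j, ℓ), by simpa [mrow] using hℓ, rfl⟩, ℓ, rfl⟩
  rw [hrow, card_map]

variable [NeZero q]

lemma densityFn_inputDist (D : (Fin n × Fin k' → ZMod q) → ℝ)
    (Y : (Fin k → ZMod q) → ℝ) (Z : Fin m × Fin k → ZMod q) :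
    densityFn (inputDist D Y φ M) Z
      = ∑ X, D X * densityFn (prodRows Y) (X ∘ hyperedgeVertex φ M - Z) := by
  simp only [densityFn, inputDist, mul_sum]
  exact sum_congr rfl fun X _ => mul_left_comm _ _ _

lemma densityFn_inputDist_sub_one (hφ : Injective φ) (hM : M ∈ PHMset m k n)
    {Y : (Fin k → ZMod q) → ℝ} (hY : ∑ y, Y y = 1) {D : (Fin n × Fin k' → ZMod q) → ℝ}
    (hD : ∑ x, D x = 1) (Z : Fin m × Fin k → ZMod q) :
    ((densityFn (inputDist D Y φ M) Z : ℝ) : ℂ) - 1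
      = ∑ V ∈ univ.erase 0, fourierDensity D (extend (hyperedgeVertex φ M) V 0)
          * fourierDensity (prodRows Y) (-V) * ZMod.stdAddChar (V ⬝ᵥ Z) := by
  rw [sum_erase_eq_sub (mem_univ 0), densityFn_inputDist,
    ← sum_mul_densityFn_comp_sub (hyperedgeVertex_injective hφ hM)]
  simp [extend_zero, fourierDensity_zero hD, fourierDensity_prodRows_zero hY]

lemma extend_hyperedgeVertex_mem (hφ : Injective φ) (hM : M ∈ PHMset m k n)
    {V : Fin m × Fin k → ZMod q} (hV0 : V ≠ 0) (hV : SingletonFree V) :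
    extend (hyperedgeVertex φ M) V 0 ∈ univ.filter fun U => U ≠ 0 ∧
      suppF U ⊆ univ.biUnion (edgePhi φ M) ∧
        ∀ j, (suppF U ∩ edgePhi φ M j).card ≠ 1 := by
  have he := hyperedgeVertex_injective hφ hM
  refine mem_filter.mpr ⟨mem_univ _, fun h => hV0 ?_, fun p hp => ?_, fun j => ?_⟩
  · funext r
    simpa [he.extend_apply] using congrFun h (hyperedgeVertex φ M r)
  · obtain ⟨r, -, rfl⟩ := mem_map.mp (suppF_extend_zero he V ▸ hp)
    exact mem_biUnion.mpr ⟨r.1, mem_univ _, mem_image_of_mem _ (mem_univ r.2)⟩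
  · rw [card_suppF_extend_inter_edgePhi hφ hM]
    exact hV j

lemma sum_norm_fourierDensity_extend_le (hφ : Injective φ) (hM : M ∈ PHMset m k n)
    (D : (Fin n × Fin k' → ZMod q) → ℝ) :
    ∑ V ∈ (univ.erase 0).filter SingletonFree,
        ‖fourierDensity D (extend (hyperedgeVertex φ M) V 0)‖
      ≤ ∑ U ∈ univ.filter (fun U => U ≠ 0 ∧ suppF U ⊆ univ.biUnion (edgePhi φ M) ∧
          ∀ j, (suppF U ∩ edgePhi φ M j).card ≠ 1), ‖fourierDensity D U‖ := by
  rw [← sum_image (f := fun U => ‖fourierDensity D U‖)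
    fun V _ W _ h => extend_injective (hyperedgeVertex_injective hφ hM) 0 h]
  refine sum_le_sum_of_subset_of_nonneg (fun U hU => ?_) fun _ _ _ => norm_nonneg _
  obtain ⟨V, hV, rfl⟩ := mem_image.mp hU
  obtain ⟨hV0, hVsf⟩ := mem_filter.mp hV
  exact extend_hyperedgeVertex_mem hφ hM (ne_of_mem_erase hV0) hVsf

end Hypermatching

theorem input_density_close_to_uniform_general
    (q : ℕ) [NeZero q] (m k n k' : ℕ)
    (φ : Fin k → Fin k') (hφ : Function.Injective φ)
    (M : Fin m → Fin k → Fin n) (hM : M ∈ PHMset m k n)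
    (Y : (Fin k → ZMod q) → ℝ) (hY : IsDist Y) (hY1 : OneWise Y)
    (D : (Fin n × Fin k' → ZMod q) → ℝ) (hD : IsDist D) :
    ∀ Z : Fin m × Fin k → ZMod q,
      |densityFn (inputDist D Y φ M) Z - 1|
        ≤ ∑ U ∈ (univ : Finset (Fin n × Fin k' → ZMod q)).filter
            (fun U => U ≠ 0 ∧ suppF U ⊆ univ.biUnion (edgePhi φ M) ∧
              ∀ j : Fin m, (suppF U ∩ edgePhi φ M j).card ≠ 1),
          ‖fourierDensity D U‖ := by
  intro Z
  set e := hyperedgeVertex φ M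
  calc |densityFn (inputDist D Y φ M) Z - 1|
      = ‖∑ V ∈ univ.erase 0, fourierDensity D (extend e V 0)
          * fourierDensity (prodRows Y) (-V) * ZMod.stdAddChar (V ⬝ᵥ Z)‖ := by
        rw [← densityFn_inputDist_sub_one hφ hM hY.2 hD.2, ← Complex.ofReal_one,
          ← Complex.ofReal_sub, Complex.norm_real, Real.norm_eq_abs]
    _ ≤ ∑ V ∈ univ.erase 0, ‖fourierDensity D (extend e V 0)
          * fourierDensity (prodRows Y) (-V) * ZMod.stdAddChar (V ⬝ᵥ Z)‖ := norm_sum_le _ _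
    _ ≤ ∑ V ∈ univ.erase 0,
          if SingletonFree V then ‖fourierDensity D (extend e V 0)‖ else 0 :=
        sum_le_sum fun V _ => by
          rw [norm_mul, AddChar.norm_apply, mul_one]
          exact norm_mul_fourierDensity_prodRows_neg_le hY hY1 _ V
    _ ≤ _ := by
        rw [← sum_filter]
        exact sum_norm_fourierDensity_extend_le hφ hM D

/-- The sup-distance of the density of `Input(D,M)` from `1` is at most
the Fourier 1-mass of `μ_D` on nonzero frequencies supported in `φ(supp(M))` meeting no
hyperedge in exactly one vertex. -/
theorem input_density_close_to_uniform
    (q : ℕ) [NeZero q] (hq : 2 ≤ q) (m k n k' : ℕ) (hkk' : k ≤ k')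
    (φ : Fin k → Fin k') (hφ : Function.Injective φ)
    (M : Fin m → Fin k → Fin n) (hM : M ∈ PHMset m k n)
    (Y : (Fin k → ZMod q) → ℝ) (hY : IsDist Y) (hY1 : OneWise Y)
    (D : (Fin n × Fin k' → ZMod q) → ℝ) (hD : IsDist D) :
    ∀ Z : Fin m × Fin k → ZMod q,
      |densityFn (inputDist D Y φ M) Z - 1|
        ≤ ∑ U ∈ (univ : Finset (Fin n × Fin k' → ZMod q)).filter
            (fun U => U ≠ 0 ∧ suppF U ⊆ univ.biUnion (edgePhi φ M) ∧
              ∀ j : Fin m, (suppF U ∩ edgePhi φ M j).card ≠ 1),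
          ‖fourierDensity D U‖ :=
  input_density_close_to_uniform_general q m k n k' φ hφ M hM Y hY hY1 D hD
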